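/- arXiv:2005.08789 — 3 statements merged into one kernel-verified Lean document; each statement's English description precedes it below -/
import Mathlib

section
/- For all x = (x_1, x_2) ∈ ℝ² with x ≠ 0, writing x = |x| (cos α, sin α) with α ∈ [0, π/2] (i.e. x_1 ≥ 0 and x_2 ≥ 0), the asymmetric Bessel function J_+(x) = ∫_{-π/2}^{π/2} e^{i x·(cos θ, sin θ)} dθ satisfies J_+(x) = ∫_{-a}^{a} e^{i|x|s} (1-s²)^{-1/2} ds + 2∫_{a}^{1} e^{i|x|s} (1-s²)^{-1/2} ds, where a = x_2/|x| = sin α. -/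
open MeasureTheory Real

noncomputable def Jplus (x1 x2 : ℝ) : ℂ :=
  ∫ θ in (-(Real.pi / 2))..(Real.pi / 2),
    Complex.exp (Complex.I * ((x1 * Real.cos θ + x2 * Real.sin θ : ℝ) : ℂ))

noncomputable def gg (r : ℝ) (s : ℝ) : ℂ :=
  Complex.exp (Complex.I * ((r * s : ℝ) : ℂ)) * ((Real.sqrt (1 - s ^ 2) : ℝ) : ℂ)⁻¹

lemma sin_mem_Ioo' {x : ℝ} (hx : x ∈ Set.Ioo (-(π/2)) (π/2)) :
    Real.sin x ∈ Set.Ioo (-1:ℝ) 1 := by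
  constructor
  · have := Real.strictMonoOn_sin (a := -(π/2)) (b := x) ⟨le_refl _, by linarith [Real.pi_pos]⟩
      ⟨hx.1.le, hx.2.le⟩ hx.1
    simpa using this
  · have := Real.strictMonoOn_sin (a := x) (b := π/2) ⟨hx.1.le, hx.2.le⟩
      ⟨by linarith [Real.pi_pos], le_refl _⟩ hx.2
    simpa using this

lemma image_sin_Ioo : Real.sin '' Set.Ioo (-(π/2)) (π/2) = Set.Ioo (-1:ℝ) 1 := by
  ext y
  constructor
  · rintro ⟨x, hx, rfl⟩; exact sin_mem_Ioo' hx
  · rintro ⟨hy1, hy2⟩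
    exact ⟨Real.arcsin y, ⟨Real.neg_pi_div_two_lt_arcsin.mpr hy1,
      Real.arcsin_lt_pi_div_two.mpr hy2⟩, Real.sin_arcsin hy1.le hy2.le⟩

lemma gg_cont (r : ℝ) : ContinuousOn (gg r) (Set.Ioo (-1:ℝ) 1) := by
  apply ContinuousOn.mul
  · exact (Complex.continuous_exp.comp (continuous_const.mul
      (Complex.continuous_ofReal.comp (continuous_const.mul continuous_id)))).continuousOn
  · apply ContinuousOn.inv₀
    · exact (Complex.continuous_ofReal.comp (Real.continuous_sqrt.comp
        (continuous_const.sub (continuous_pow 2)))).continuousOn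
    · intro s hs
      have h : (0:ℝ) < 1 - s ^ 2 := by nlinarith [hs.1, hs.2]
      exact_mod_cast Real.sqrt_ne_zero'.mpr h

lemma sqrt_one_sub_sin_sq (x : ℝ) : Real.sqrt (1 - Real.sin x ^ 2) = |Real.cos x| := by
  rw [show (1 : ℝ) - Real.sin x ^ 2 = Real.cos x ^ 2 by
    rw [← Real.sin_sq_add_cos_sq x]; ring, Real.sqrt_sq_eq_abs]

lemma gg_smul {r x : ℝ} (hc : 0 < Real.cos x) :
    Real.cos x • gg r (Real.sin x) = Complex.exp (Complex.I * ((r * Real.sin x : ℝ) : ℂ)) := by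
  simp only [gg, sqrt_one_sub_sin_sq, abs_of_pos hc, Complex.real_smul]
  rw [mul_comm (Complex.exp _), ← mul_assoc, mul_inv_cancel₀ (by exact_mod_cast hc.ne'), one_mul]

lemma gg_smul_neg {r x : ℝ} (hc : Real.cos x < 0) :
    Real.cos x • gg r (Real.sin x) = -Complex.exp (Complex.I * ((r * Real.sin x : ℝ) : ℂ)) := by
  simp only [gg, sqrt_one_sub_sin_sq, abs_of_neg hc, Complex.real_smul]
  have hne : ((Real.cos x : ℂ)) ≠ 0 := by exact_mod_cast hc.ne
  rw [Complex.ofReal_neg, inv_neg, mul_neg, mul_neg, neg_inj,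
    mul_comm (Complex.exp _), ← mul_assoc, mul_inv_cancel₀ hne, one_mul]

lemma gg_integrableOn (r : ℝ) : IntegrableOn (gg r) (Set.Icc (-1:ℝ) 1) := by
  rw [integrableOn_Icc_iff_integrableOn_Ioo, ← image_sin_Ioo,
    integrableOn_image_iff_integrableOn_abs_deriv_smul measurableSet_Ioo
      (fun x _ => (Real.hasDerivAt_sin x).hasDerivWithinAt)
      (Real.injOn_sin.mono Set.Ioo_subset_Icc_self) (gg r)]
  have heq : Set.EqOn (fun x => |Real.cos x| • gg r (Real.sin x))
      (fun x => Complex.exp (Complex.I * ((r * Real.sin x : ℝ) : ℂ)))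
      (Set.Ioo (-(π/2)) (π/2)) := by
    intro x hx
    have hc : 0 < Real.cos x := Real.cos_pos_of_mem_Ioo hx
    simp only [abs_of_pos hc]
    exact gg_smul hc
  rw [integrableOn_congr_fun heq measurableSet_Ioo]
  exact ((Complex.continuous_exp.comp (continuous_const.mul
    (Complex.continuous_ofReal.comp
      (continuous_const.mul Real.continuous_sin)))).integrableOn_Icc).mono_set
    Set.Ioo_subset_Icc_self

lemma gg_intervalIntegrable (r c d : ℝ) (hc : c ∈ Set.Icc (-1:ℝ) 1)
    (hd : d ∈ Set.Icc (-1:ℝ) 1) : IntervalIntegrable (gg r) volume c d := by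
  rw [intervalIntegrable_iff']
  refine (gg_integrableOn r).mono_set ?_
  rw [show Set.Icc (-1:ℝ) 1 = Set.uIcc (-1:ℝ) 1 by rw [Set.uIcc_of_le (by norm_num)]]
  exact Set.uIcc_subset_uIcc (by simpa [Set.uIcc_of_le (show (-1:ℝ) ≤ 1 by norm_num)] using hc)
    (by simpa [Set.uIcc_of_le (show (-1:ℝ) ≤ 1 by norm_num)] using hd)

/-- For `x = (x₁, x₂)` with `x₁ ≥ 0`, `x₂ ≥ 0`, `x ≠ 0`, writing `a = x₂/|x|`,
`J₊(x) = ∫_{-a}^a e^{i|x|s}(1-s²)^{-1/2} ds + 2∫_a^1 e^{i|x|s}(1-s²)^{-1/2} ds`. -/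
theorem stmt_0 (x1 x2 : ℝ) (h1 : 0 ≤ x1) (h2 : 0 ≤ x2) (hx : ¬(x1 = 0 ∧ x2 = 0)) :
    Jplus x1 x2 =
      (∫ s in (-(x2 / Real.sqrt (x1 ^ 2 + x2 ^ 2)))..(x2 / Real.sqrt (x1 ^ 2 + x2 ^ 2)),
          Complex.exp (Complex.I * ((Real.sqrt (x1 ^ 2 + x2 ^ 2) * s : ℝ) : ℂ)) *
            ((Real.sqrt (1 - s ^ 2) : ℝ) : ℂ)⁻¹) +
        2 * ∫ s in (x2 / Real.sqrt (x1 ^ 2 + x2 ^ 2))..(1 : ℝ),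
          Complex.exp (Complex.I * ((Real.sqrt (x1 ^ 2 + x2 ^ 2) * s : ℝ) : ℂ)) *
            ((Real.sqrt (1 - s ^ 2) : ℝ) : ℂ)⁻¹ := by
  have hx' : x1 ≠ 0 ∨ x2 ≠ 0 := by tauto
  set r := Real.sqrt (x1 ^ 2 + x2 ^ 2) with hr_def
  have hr : 0 < r := by
    apply Real.sqrt_pos.mpr
    rcases hx' with h | h
    · positivity
    · positivity
  have hr2 : r ^ 2 = x1 ^ 2 + x2 ^ 2 := Real.sq_sqrt (by positivity)
  set a := x2 / r with ha_def
  have ha0 : 0 ≤ a := div_nonneg h2 hr.le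
  have hx2r : x2 ≤ r := by
    rw [show x2 = Real.sqrt (x2 ^ 2) from (Real.sqrt_sq h2).symm]
    exact Real.sqrt_le_sqrt (by nlinarith)
  have ha1 : a ≤ 1 := (div_le_one hr).mpr hx2r
  set α := Real.arcsin a with hα_def
  have hα0 : 0 ≤ α := Real.arcsin_nonneg.mpr ha0
  have hα2 : α ≤ π / 2 := Real.arcsin_le_pi_div_two a
  have hsinα : Real.sin α = a := Real.sin_arcsin (by linarith) ha1
  have hcosα : Real.cos α = x1 / r := by
    rw [hα_def, Real.cos_arcsin]
    rw [show (1 : ℝ) - a ^ 2 = (x1 / r) ^ 2 by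
      rw [ha_def]; field_simp; nlinarith]
    exact Real.sqrt_sq (div_nonneg h1 hr.le)
  have hpi := Real.pi_pos
  -- the θ-integrand after rotation
  set h : ℝ → ℂ := fun φ => Complex.exp (Complex.I * ((r * Real.sin φ : ℝ) : ℂ)) with hh_def
  have hh_cont : Continuous h :=
    Complex.continuous_exp.comp (continuous_const.mul
      (Complex.continuous_ofReal.comp (continuous_const.mul Real.continuous_sin)))
  have step1 : Jplus x1 x2 = ∫ θ in (-(π/2))..(π/2), h ((π/2 + α) - θ) := by
    unfold Jplus
    apply intervalIntegral.integral_congr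
    intro θ _
    simp only [hh_def]
    have hre : x1 * Real.cos θ + x2 * Real.sin θ = r * Real.sin (π/2 + α - θ) := by
      rw [show π/2 + α - θ = π/2 - (θ - α) by ring, Real.sin_pi_div_two_sub,
        Real.cos_sub, hcosα, hsinα, ha_def]
      field_simp
    rw [hre]
  have step2 : Jplus x1 x2 = ∫ φ in α..(π + α), h φ := by
    rw [step1, intervalIntegral.integral_comp_sub_left h (π/2 + α),
      show π/2 + α - π/2 = α from by ring, show π/2 + α - -(π/2) = π + α from by ring]
  have hsplit : (∫ φ in α..(π + α), h φ) =
      (∫ φ in α..(π/2), h φ) + ∫ φ in (π/2)..(π + α), h φ :=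
    (intervalIntegral.integral_add_adjacent_intervals
      (hh_cont.intervalIntegrable _ _) (hh_cont.intervalIntegrable _ _)).symm
  have hae1 : ∀ᵐ (x : ℝ), x ≠ π/2 := by
    rw [MeasureTheory.ae_iff]
    simpa using measure_singleton (π/2 : ℝ)
  have hae2 : ∀ᵐ (x : ℝ), x ≠ π + π/2 := by
    rw [MeasureTheory.ae_iff]
    simpa using measure_singleton (π + π/2 : ℝ)
  -- first substitution:  ∫_α^{π/2} h = ∫_a^1 gg r
  have sub1 : (∫ φ in α..(π/2), h φ) = ∫ s in a..(1:ℝ), gg r s := by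
    have key := intervalIntegral.integral_comp_smul_deriv''' (a := α) (b := π/2)
      (f := Real.sin) (f' := Real.cos) (g := gg r)
      (Real.continuous_sin.continuousOn)
      (fun x _ => (Real.hasDerivAt_sin x).hasDerivWithinAt)
      ?_ ?_ ?_
    · rw [Real.sin_pi_div_two, hsinα] at key
      rw [← key]
      apply intervalIntegral.integral_congr_ae
      filter_upwards [hae1] with x hne hx
      rw [Set.uIoc_of_le hα2] at hx
      have hxo : x ∈ Set.Ioo (-(π/2)) (π/2) :=
        ⟨by linarith [hx.1], lt_of_le_of_ne hx.2 hne⟩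
      exact (gg_smul (Real.cos_pos_of_mem_Ioo hxo)).symm
    · rw [min_eq_left hα2, max_eq_right hα2]
      apply (gg_cont r).mono
      rintro _ ⟨x, hx, rfl⟩
      exact sin_mem_Ioo' ⟨by linarith [hx.1], hx.2⟩
    · refine (gg_integrableOn r).mono_set ?_
      rintro _ ⟨x, _, rfl⟩
      exact ⟨Real.neg_one_le_sin x, Real.sin_le_one x⟩
    · rw [Set.uIcc_of_le hα2]
      apply (hh_cont.integrableOn_Icc).congr
      filter_upwards [MeasureTheory.ae_restrict_mem measurableSet_Icc,
        ae_restrict_of_ae hae1] with x hx hne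
      have hxo : x ∈ Set.Ioo (-(π/2)) (π/2) :=
        ⟨by linarith [hx.1], lt_of_le_of_ne hx.2 hne⟩
      exact (gg_smul (Real.cos_pos_of_mem_Ioo hxo)).symm
  -- second substitution:  ∫_{π/2}^{π+α} h = ∫_{-a}^1 gg r
  have hle2 : π/2 ≤ π + α := by linarith
  have hsinπα : Real.sin (π + α) = -a := by
    rw [Real.sin_add]; simp [hsinα]
  have sub2 : (∫ φ in (π/2)..(π + α), h φ) = ∫ s in (-a)..(1:ℝ), gg r s := by
    have key := intervalIntegral.integral_comp_smul_deriv''' (a := π/2) (b := π + α)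
      (f := Real.sin) (f' := Real.cos) (g := gg r)
      (Real.continuous_sin.continuousOn)
      (fun x _ => (Real.hasDerivAt_sin x).hasDerivWithinAt)
      ?_ ?_ ?_
    · rw [Real.sin_pi_div_two, hsinπα] at key
      have : (∫ φ in (π/2)..(π + α), h φ) =
          -∫ x in (π/2)..(π + α), Real.cos x • (gg r ∘ Real.sin) x := by
        rw [← intervalIntegral.integral_neg]
        apply intervalIntegral.integral_congr_ae
        filter_upwards [hae2] with x hne hx
        rw [Set.uIoc_of_le hle2] at hx
        have hc : Real.cos x < 0 := by
          apply Real.cos_neg_of_pi_div_two_lt_of_lt hx.1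
          rcases lt_or_eq_of_le hα2 with h' | h'
          · linarith [hx.2]
          · exact lt_of_le_of_ne (by linarith [hx.2]) hne
        simp only [Function.comp_apply, gg_smul_neg hc, neg_neg, hh_def]
      rw [this, key, intervalIntegral.integral_symm, neg_neg]
    · rw [min_eq_left hle2, max_eq_right hle2]
      apply (gg_cont r).mono
      rintro _ ⟨x, hx, rfl⟩
      rw [← Real.sin_pi_sub]
      exact sin_mem_Ioo' ⟨by linarith [hx.2], by linarith [hx.1]⟩
    · refine (gg_integrableOn r).mono_set ?_
      rintro _ ⟨x, _, rfl⟩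
      exact ⟨Real.neg_one_le_sin x, Real.sin_le_one x⟩
    · rw [Set.uIcc_of_le hle2]
      apply ((hh_cont.neg).integrableOn_Icc).congr
      filter_upwards [MeasureTheory.ae_restrict_mem measurableSet_Icc,
        ae_restrict_of_ae hae1, ae_restrict_of_ae hae2] with x hx hne1 hne2
      have h' : π/2 < x := lt_of_le_of_ne hx.1 (Ne.symm hne1)
      have hc : Real.cos x < 0 := by
        apply Real.cos_neg_of_pi_div_two_lt_of_lt h'
        rcases lt_or_eq_of_le hα2 with h'' | h''
        · linarith [hx.2]
        · exact lt_of_le_of_ne (by linarith [hx.2]) hne2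
      exact (gg_smul_neg hc).symm
  -- combine
  have hadd : (∫ s in (-a)..(1:ℝ), gg r s) =
      (∫ s in (-a)..a, gg r s) + ∫ s in a..(1:ℝ), gg r s :=
    (intervalIntegral.integral_add_adjacent_intervals
      (gg_intervalIntegrable r _ _ ⟨by linarith, by linarith⟩ ⟨by linarith, ha1⟩)
      (gg_intervalIntegrable r _ _ ⟨by linarith, ha1⟩ ⟨by norm_num, le_refl _⟩)).symm
  have final : Jplus x1 x2 = (∫ s in (-a)..a, gg r s) + 2 * ∫ s in a..(1:ℝ), gg r s := by
    rw [step2, hsplit, sub1, sub2, hadd]; ring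
  simpa only [gg] using final
end

section
/- Let m_0(r) = √(r · tanh(r)) for r > 0. Then m_0 is differentiable on (0,∞), m_0'(r) > 0 for all r > 0, and there exist constants c, C > 0 such that c ⟨r⟩^{-1/2} ≤ m_0'(r) ≤ C ⟨r⟩^{-1/2} for all r > 0, where ⟨r⟩ = (1+r²)^{1/2}. -/
open Real

/-- `m₀(r) = √(r tanh r)`. -/
noncomputable def m0 (r : ℝ) : ℝ := Real.sqrt (r * Real.tanh r)

lemma tanh_formula (x : ℝ) :
    Real.tanh x = (Real.exp (2*x) - 1) / (Real.exp (2*x) + 1) := by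
  rw [Real.tanh_eq_sinh_div_cosh, Real.sinh_eq, Real.cosh_eq]
  have h1 : Real.exp x ≠ 0 := (Real.exp_pos x).ne'
  have h2 : Real.exp (2*x) = Real.exp x * Real.exp x := by
    rw [two_mul, Real.exp_add]
  rw [Real.exp_neg, h2]
  have h3 : (0:ℝ) < Real.exp x * Real.exp x + 1 := by positivity
  field_simp

lemma my_hasDerivAt_tanh (x : ℝ) :
    HasDerivAt Real.tanh (1 - Real.tanh x ^ 2) x := by
  have h : HasDerivAt (fun y => Real.sinh y / Real.cosh y)
      ((Real.cosh x * Real.cosh x - Real.sinh x * Real.sinh x) / Real.cosh x ^ 2) x :=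
    (Real.hasDerivAt_sinh x).div (Real.hasDerivAt_cosh x) (Real.cosh_pos x).ne'
  have he : Real.tanh = fun y => Real.sinh y / Real.cosh y := by
    funext y; exact Real.tanh_eq_sinh_div_cosh y
  rw [he]
  convert h using 1
  have hc := (Real.cosh_pos x).ne'
  have hh := Real.cosh_sq_sub_sinh_sq x
  show 1 - (Real.sinh x / Real.cosh x) ^ 2 = _
  field_simp

lemma tanh_pos' {r : ℝ} (hr : 0 < r) : 0 < Real.tanh r := by
  rw [tanh_formula]
  have hE : 1 + 2*r ≤ Real.exp (2*r) := by
    have := Real.add_one_le_exp (2*r); linarith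
  have hE0 : (0:ℝ) < Real.exp (2*r) := Real.exp_pos _
  apply div_pos <;> linarith

lemma tanh_le_one' (r : ℝ) : Real.tanh r ≤ 1 := by
  rw [tanh_formula]
  have hE0 : (0:ℝ) < Real.exp (2*r) := Real.exp_pos _
  rw [div_le_one (by linarith)]
  linarith

lemma tanh_le_two_mul {r : ℝ} (hr : 0 < r) : Real.tanh r ≤ 2 * r := by
  rw [tanh_formula]
  have hE0 : (0:ℝ) < Real.exp (2*r) := Real.exp_pos _
  have key : Real.exp (2*r) * Real.exp (-(2*r)) = 1 := by
    rw [← Real.exp_add]; simp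
  have h2 : 1 - 2*r ≤ Real.exp (-(2*r)) := by
    have := Real.add_one_le_exp (-(2*r)); linarith
  have h3 : Real.exp (2*r) * (1 - 2*r) ≤ 1 := by
    calc Real.exp (2*r) * (1 - 2*r) ≤ Real.exp (2*r) * Real.exp (-(2*r)) :=
          mul_le_mul_of_nonneg_left h2 hE0.le
      _ = 1 := key
  rw [div_le_iff₀ (by linarith)]
  nlinarith [hr.le]

lemma min_div_two_le_tanh {r : ℝ} (hr : 0 < r) : min r 1 / 2 ≤ Real.tanh r := by
  have hE : 1 + 2*r ≤ Real.exp (2*r) := by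
    have := Real.add_one_le_exp (2*r); linarith
  have hE0 : (0:ℝ) < Real.exp (2*r) := Real.exp_pos _
  rw [tanh_formula]
  rcases le_total r 1 with h | h
  · rw [min_eq_left h, div_le_div_iff₀ (by norm_num) (by linarith)]
    nlinarith [mul_nonneg (by linarith : (0:ℝ) ≤ Real.exp (2*r) - (1 + 2*r)) (by linarith : (0:ℝ) ≤ 2 - r), mul_nonneg hr.le (by linarith : (0:ℝ) ≤ 1 - r)]
  · rw [min_eq_right h, div_le_div_iff₀ (by norm_num) (by linarith)]
    nlinarith

lemma mul_one_sub_tanh_sq_le {r : ℝ} (hr : 0 < r) : r * (1 - Real.tanh r ^ 2) ≤ 2 := by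
  have hE : 1 + 2*r ≤ Real.exp (2*r) := by
    have := Real.add_one_le_exp (2*r); linarith
  have hE0 : (0:ℝ) < Real.exp (2*r) := Real.exp_pos _
  rw [tanh_formula]
  have h1 : 1 - ((Real.exp (2*r) - 1) / (Real.exp (2*r) + 1)) ^ 2
      = 4 * Real.exp (2*r) / (Real.exp (2*r) + 1) ^ 2 := by
    field_simp
    ring
  rw [h1]
  have h2 : r * (4 * Real.exp (2*r) / (Real.exp (2*r) + 1) ^ 2)
      = 4 * r * Real.exp (2*r) / (Real.exp (2*r) + 1) ^ 2 := by ring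
  rw [h2, div_le_iff₀ (by positivity)]
  nlinarith [mul_nonneg (by linarith : (0:ℝ) ≤ Real.exp (2*r) - (1 + 2*r)) hE0.le, sq_nonneg (Real.exp (2*r) + 1)]

lemma hasDerivAt_m0 {r : ℝ} (hr : 0 < r) :
    HasDerivAt m0 ((Real.tanh r + r * (1 - Real.tanh r ^ 2)) / (2 * Real.sqrt (r * Real.tanh r))) r := by
  have ht : 0 < Real.tanh r := tanh_pos' hr
  have hg : HasDerivAt (fun y => y * Real.tanh y)
      (Real.tanh r + r * (1 - Real.tanh r ^ 2)) r := by
    have := (hasDerivAt_id r).mul (my_hasDerivAt_tanh r)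
    convert this using 1
    · rfl
    · rfl
    · rfl
    · simp
  have hne : r * Real.tanh r ≠ 0 := by positivity
  exact hg.sqrt hne

set_option maxHeartbeats 1000000 in
/-- `m₀` is differentiable on `(0,∞)`, `m₀' > 0`, and `m₀'(r) ∼ ⟨r⟩^{-1/2}`. -/
theorem stmt_10 :
    (∀ r : ℝ, 0 < r → DifferentiableAt ℝ m0 r) ∧
      ∃ c > (0 : ℝ), ∃ C > (0 : ℝ), ∀ r : ℝ, 0 < r →
        0 < deriv m0 r ∧
        c * (Real.sqrt (1 + r ^ 2)) ^ (-(1 / 2) : ℝ) ≤ deriv m0 r ∧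
        deriv m0 r ≤ C * (Real.sqrt (1 + r ^ 2)) ^ (-(1 / 2) : ℝ) := by
  refine ⟨fun r hr => (hasDerivAt_m0 hr).differentiableAt,
    1/6, by norm_num, 3, by norm_num, fun r hr => ?_⟩
  have ht0 : 0 < Real.tanh r := tanh_pos' hr
  have ht1 : Real.tanh r ≤ 1 := tanh_le_one' r
  set t := Real.tanh r with htdef
  set M := min r 1 with hMdef
  have hM0 : 0 < M := lt_min hr one_pos
  have hMr : M ≤ r := min_le_left _ _
  have hM1 : M ≤ 1 := min_le_right _ _
  have htlo : M / 2 ≤ t := min_div_two_le_tanh hr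
  have hthi : t ≤ 2 * M := by
    rcases le_total r 1 with h | h
    · rw [hMdef, min_eq_left h]; exact tanh_le_two_mul hr
    · rw [hMdef, min_eq_right h]; linarith
  set g' := t + r * (1 - t ^ 2) with hg'def
  have hg'lo : M / 2 ≤ g' := by
    have h1 : (0:ℝ) ≤ 1 - t^2 := by nlinarith
    nlinarith [mul_nonneg hr.le h1]
  have hg'hi : g' ≤ 3 * M := by
    rcases le_total r 1 with h | h
    · have h1 : t ≤ 2 * r := tanh_le_two_mul hr
      have h2 : (1:ℝ) - t^2 ≤ 1 := by nlinarith
      have hM : M = r := min_eq_left h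
      nlinarith [mul_le_mul_of_nonneg_left h2 hr.le]
    · have h1 : r * (1 - t^2) ≤ 2 := mul_one_sub_tanh_sq_le hr
      have hM : M = 1 := min_eq_right h
      nlinarith
  have hg'0 : 0 < g' := lt_of_lt_of_le (by positivity) hg'lo
  have hrt : 0 < r * t := mul_pos hr ht0
  set q := Real.sqrt (r * t) with hqdef
  have hq0 : 0 < q := Real.sqrt_pos.2 hrt
  have hq2 : q ^ 2 = r * t := Real.sq_sqrt hrt.le
  have hD : deriv m0 r = g' / (2 * q) := (hasDerivAt_m0 hr).deriv
  have hDpos : 0 < deriv m0 r := by rw [hD]; positivity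
  have hs0 : 0 < Real.sqrt (1 + r ^ 2) := Real.sqrt_pos.2 (by positivity)
  set s := Real.sqrt (1 + r ^ 2) with hsdef
  have hA : s ^ (-(1/2) : ℝ) = (Real.sqrt s)⁻¹ := by
    rw [Real.rpow_neg hs0.le, ← Real.sqrt_eq_rpow]
  have hss0 : 0 < Real.sqrt s := Real.sqrt_pos.2 hs0
  have hss2 : (Real.sqrt s) ^ 2 = s := Real.sq_sqrt hs0.le
  have hs1 : 1 ≤ s := Real.le_sqrt_of_sq_le (by nlinarith)
  have hL1 : r ≤ M * s := by
    rcases le_total r 1 with h | h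
    · have hM : M = r := min_eq_left h
      nlinarith [mul_nonneg hr.le (by linarith : (0:ℝ) ≤ s - 1)]
    · have hM : M = 1 := min_eq_right h
      have : r ≤ s := Real.le_sqrt_of_sq_le (by nlinarith)
      nlinarith
  have hL2 : M * s ≤ 2 * r := by
    rcases le_total r 1 with h | h
    · have hM : M = r := min_eq_left h
      have h4 : s ≤ 2 := by
        have h5 : Real.sqrt (1 + r^2) ≤ Real.sqrt (2^2) := Real.sqrt_le_sqrt (by nlinarith)
        rwa [Real.sqrt_sq (by norm_num : (0:ℝ) ≤ 2)] at h5
      nlinarith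
    · have hM : M = 1 := min_eq_right h
      have h4 : s ≤ 2 * r := by
        have h5 : Real.sqrt (1 + r^2) ≤ Real.sqrt ((2*r)^2) := Real.sqrt_le_sqrt (by nlinarith)
        rwa [Real.sqrt_sq (by positivity)] at h5
      nlinarith
  refine ⟨hDpos, ?_, ?_⟩
  · -- lower bound
    rw [hA, hD]
    have key : (1/6 * (Real.sqrt s)⁻¹) ^ 2 ≤ (g' / (2 * q)) ^ 2 := by
      have lhs_eq : (1/6 * (Real.sqrt s)⁻¹) ^ 2 = 1 / (36 * s) := by
        rw [mul_pow, inv_pow, hss2]; rw [show ((1:ℝ)/6)^2 = 1/36 by norm_num]; field_simp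
      have rhs_eq : (g' / (2 * q)) ^ 2 = g'^2 / (4 * (r * t)) := by
        rw [div_pow, mul_pow, hq2]; norm_num
      rw [lhs_eq, rhs_eq]
      have step1 : (M/2)^2 / (4 * (r * (2*M))) ≤ g'^2 / (4 * (r * t)) := by
        apply div_le_div₀ (by positivity) _ (by positivity) (by nlinarith)
        nlinarith
      have step2 : (1:ℝ) / (36 * s) ≤ (M/2)^2 / (4 * (r * (2*M))) := by
        have e : (M/2)^2 / (4 * (r * (2*M))) = M / (32 * r) := by
          field_simp; ring
        rw [e, div_le_div_iff₀ (by positivity) (by positivity)]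
        nlinarith
      linarith
    have h2 := Real.sqrt_le_sqrt key
    rwa [Real.sqrt_sq (by positivity), Real.sqrt_sq (by positivity)] at h2
  · -- upper bound
    rw [hA, hD]
    have key : (g' / (2 * q)) ^ 2 ≤ (3 * (Real.sqrt s)⁻¹) ^ 2 := by
      have lhs_eq : (g' / (2 * q)) ^ 2 = g'^2 / (4 * (r * t)) := by
        rw [div_pow, mul_pow, hq2]; norm_num
      have rhs_eq : (3 * (Real.sqrt s)⁻¹) ^ 2 = 9 / s := by
        rw [mul_pow, inv_pow, hss2]; rw [show ((3:ℝ))^2 = 9 by norm_num]; field_simp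
      rw [lhs_eq, rhs_eq]
      have step1 : g'^2 / (4 * (r * t)) ≤ (3*M)^2 / (4 * (r * (M/2))) := by
        apply div_le_div₀ (by positivity) _ (by positivity) (by nlinarith)
        nlinarith
      have step2 : (3*M)^2 / (4 * (r * (M/2))) ≤ 9 / s := by
        have e : (3*M)^2 / (4 * (r * (M/2))) = 9 * M / (2 * r) := by
          field_simp; ring
        rw [e, div_le_div_iff₀ (by positivity) hs0]
        nlinarith
      linarith
    have h2 := Real.sqrt_le_sqrt key
    rwa [Real.sqrt_sq (by positivity), Real.sqrt_sq (by positivity)] at h2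
end

section
/- Let m_0(r) = √(r tanh(r)) for r > 0. Then m_0 is twice differentiable on (0,∞), m_0''(r) < 0 for all r > 0, and there exist constants c, C > 0 such that c · r ⟨r⟩^{-5/2} ≤ |m_0''(r)| ≤ C · r ⟨r⟩^{-5/2} for all r > 0, where ⟨r⟩ = (1+r²)^{1/2}. -/
set_option maxHeartbeats 2000000

open Real

noncomputable def Pf (r : ℝ) : ℝ :=
  4*r^2*Real.sinh r^2 + (Real.sinh r*Real.cosh r - r)^2

noncomputable def Df (r : ℝ) : ℝ :=
  Real.cosh r^4 * (4 * (r * (Real.sinh r / Real.cosh r)) *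
    Real.sqrt (r * (Real.sinh r / Real.cosh r)))

lemma rpow_neg_5half {b : ℝ} (hb : 0 < b) :
    b ^ (-(5/2) : ℝ) = (b ^ 2 * Real.sqrt b)⁻¹ := by
  rw [Real.rpow_neg hb.le]
  congr 1
  rw [show ((5:ℝ)/2) = ((2:ℕ):ℝ) + (1/2 : ℝ) by norm_num, Real.rpow_add hb,
    Real.rpow_natCast, ← Real.sqrt_eq_rpow]

lemma A_repr (r : ℝ) : (Real.sqrt (1 + r^2)) ^ (-(5/2) : ℝ)
    = ((1 + r^2) * Real.sqrt (Real.sqrt (1 + r^2)))⁻¹ := by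
  have h1 : (0:ℝ) < 1 + r^2 := by positivity
  rw [rpow_neg_5half (Real.sqrt_pos.2 h1), Real.sq_sqrt h1.le]

lemma sinh_le_mul_cosh {x : ℝ} (h0 : 0 ≤ x) (h1 : x ≤ 1) :
    Real.sinh x ≤ x * Real.cosh x := by
  have key : MonotoneOn (fun y => y * Real.cosh y - Real.sinh y) (Set.Icc 0 1) := by
    apply monotoneOn_of_deriv_nonneg (convex_Icc 0 1)
    · fun_prop
    · intro y hy
      exact (((hasDerivAt_id' y).mul (Real.hasDerivAt_cosh y)).sub
        (Real.hasDerivAt_sinh y)).differentiableAt.differentiableWithinAt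
    · intro y hy
      rw [interior_Icc] at hy
      rw [HasDerivAt.deriv (f := fun y => y * Real.cosh y - Real.sinh y)
        (((hasDerivAt_id' y).mul (Real.hasDerivAt_cosh y)).sub
        (Real.hasDerivAt_sinh y))]
      have : 0 ≤ Real.sinh y := (Real.sinh_pos_iff.2 hy.1).le
      simp only [id_eq, one_mul]
      nlinarith [hy.1.le]
  have h := key (Set.left_mem_Icc.2 zero_le_one) (Set.mem_Icc.2 ⟨h0, h1⟩) h0
  simp only [Real.cosh_zero, Real.sinh_zero, mul_one, zero_mul, sub_zero, zero_sub] at h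
  linarith

lemma cosh_le_two {x : ℝ} (h0 : 0 ≤ x) (h1 : x ≤ 1) : Real.cosh x ≤ 2 := by
  rw [Real.cosh_eq]
  have h2 : Real.exp x ≤ Real.exp 1 := Real.exp_le_exp.2 h1
  have h3 : Real.exp 1 < 2.7182818286 := Real.exp_one_lt_d9
  have h4 : Real.exp (-x) ≤ 1 := Real.exp_le_one_iff.2 (by linarith)
  linarith

lemma sc_sub_le {x : ℝ} (h0 : 0 ≤ x) (h1 : x ≤ 1) :
    Real.sinh x * Real.cosh x - x ≤ 8 * x ^ 3 := by
  have key : MonotoneOn (fun y => 8 * y ^ 3 + y - Real.sinh y * Real.cosh y) (Set.Icc 0 1) := by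
    apply monotoneOn_of_deriv_nonneg (convex_Icc 0 1)
    · fun_prop
    · intro y hy
      exact ((((hasDerivAt_pow 3 y).const_mul 8).add (hasDerivAt_id' y)).sub
        ((Real.hasDerivAt_sinh y).mul (Real.hasDerivAt_cosh y))).differentiableAt.differentiableWithinAt
    · intro y hy
      rw [interior_Icc] at hy
      rw [HasDerivAt.deriv (f := fun y => 8 * y ^ 3 + y - Real.sinh y * Real.cosh y)
        ((((hasDerivAt_pow 3 y).const_mul 8).add (hasDerivAt_id' y)).sub
        ((Real.hasDerivAt_sinh y).mul (Real.hasDerivAt_cosh y)))]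
      have hsy : 0 ≤ Real.sinh y := (Real.sinh_pos_iff.2 hy.1).le
      have hcy : 0 < Real.cosh y := Real.cosh_pos y
      have hst : Real.sinh y ≤ y * Real.cosh y := sinh_le_mul_cosh hy.1.le hy.2.le
      have hc2 : Real.cosh y ≤ 2 := cosh_le_two hy.1.le hy.2.le
      have hcs : Real.cosh y ^ 2 = Real.sinh y ^ 2 + 1 := Real.cosh_sq y
      have hc4 : Real.cosh y ^ 2 ≤ 4 := by nlinarith
      have hs2 : Real.sinh y ^ 2 ≤ 4 * y ^ 2 := by
        nlinarith [mul_le_mul hst hst hsy (mul_nonneg hy.1.le hcy.le), sq_nonneg y]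
      norm_num
      nlinarith [sq_nonneg y]
  have h := key (Set.left_mem_Icc.2 zero_le_one) (Set.mem_Icc.2 ⟨h0, h1⟩) h0
  simp at h
  nlinarith [h]

lemma Df_pos {r : ℝ} (hr : 0 < r) : 0 < Df r := by
  have hc := Real.cosh_pos r
  have hs := Real.sinh_pos_iff.2 hr
  have hu : 0 < r * (Real.sinh r / Real.cosh r) := by positivity
  have hq := Real.sqrt_pos.2 hu
  unfold Df
  positivity

lemma Pf_pos {r : ℝ} (hr : 0 < r) : 0 < Pf r := by
  have hs := Real.sinh_pos_iff.2 hr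
  unfold Pf
  have h1 : (0:ℝ) < 4*r^2*Real.sinh r^2 :=
    mul_pos (mul_pos (by norm_num) (pow_pos hr 2)) (pow_pos hs 2)
  linarith [sq_nonneg (Real.sinh r*Real.cosh r - r)]

lemma bound_small {r : ℝ} (hr : 0 < r) (hr1 : r ≤ 1) :
    (1/900) * (r * (Real.sqrt (1 + r^2)) ^ (-(5/2) : ℝ)) ≤ Pf r / Df r ∧
      Pf r / Df r ≤ 400 * (r * (Real.sqrt (1 + r^2)) ^ (-(5/2) : ℝ)) := by
  have hc := Real.cosh_pos r
  have hc1 : 1 ≤ Real.cosh r := Real.one_le_cosh r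
  have hc2 : Real.cosh r ≤ 2 := cosh_le_two hr.le hr1
  have hs : 0 < Real.sinh r := Real.sinh_pos_iff.2 hr
  have hsr : r ≤ Real.sinh r := Real.self_le_sinh_iff.2 hr.le
  have hsc : Real.sinh r ≤ r * Real.cosh r := sinh_le_mul_cosh hr.le hr1
  have ht1 : Real.sinh r / Real.cosh r ≤ r := (div_le_iff₀ hc).2 (by linarith)
  have ht0 : r/2 ≤ Real.sinh r / Real.cosh r := (le_div_iff₀ hc).2 (by nlinarith)
  have hupos : 0 < r * (Real.sinh r / Real.cosh r) := by positivity
  have hu0 : r^2/2 ≤ r * (Real.sinh r / Real.cosh r) := by nlinarith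
  have hu1 : r * (Real.sinh r / Real.cosh r) ≤ r^2 := by nlinarith
  set q := Real.sqrt (r * (Real.sinh r / Real.cosh r)) with hqdef
  have hqpos : 0 < q := Real.sqrt_pos.2 hupos
  have hq1 : q ≤ r := by
    calc q ≤ Real.sqrt (r^2) := Real.sqrt_le_sqrt hu1
    _ = r := Real.sqrt_sq hr.le
  have hq0 : r/2 ≤ q := by
    rw [hqdef, Real.le_sqrt (by positivity) hupos.le]
    nlinarith
  -- P bounds
  have hscr0 : 0 ≤ Real.sinh r * Real.cosh r - r := by nlinarith
  have hscr1 : Real.sinh r * Real.cosh r - r ≤ 8*r^3 := sc_sub_le hr.le hr1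
  have hP1 : 4*r^4 ≤ Pf r := by
    unfold Pf
    nlinarith [sq_nonneg (Real.sinh r*Real.cosh r - r),
      mul_le_mul hsr hsr hr.le hs.le, sq_nonneg r]
  have hs2r : Real.sinh r ≤ 2*r := by nlinarith
  have hP2 : Pf r ≤ 80*r^4 := by
    unfold Pf
    have h1 : Real.sinh r^2 ≤ 4*r^2 := by nlinarith
    have h2 : (Real.sinh r*Real.cosh r - r)^2 ≤ 64*r^6 := by
      nlinarith [mul_le_mul hscr1 hscr1 hscr0 (by positivity : (0:ℝ) ≤ 8*r^3)]
    have hr2 : r^2 ≤ 1 := by nlinarith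
    have h3 : r^6 ≤ r^4 := by
      nlinarith [mul_le_mul_of_nonneg_left hr2 (by positivity : (0:ℝ) ≤ r^4)]
    have h4 : 4*r^2*Real.sinh r^2 ≤ 4*r^2*(4*r^2) :=
      mul_le_mul_of_nonneg_left h1 (by positivity : (0:ℝ) ≤ 4*r^2)
    have h5 : 4*r^2*(4*r^2) = 16*r^4 := by ring
    linarith
  -- D bounds
  have huq0 : r^2/2 * (r/2) ≤ (r * (Real.sinh r / Real.cosh r)) * q :=
    mul_le_mul hu0 hq0 (by positivity) hupos.le
  have huq1 : (r * (Real.sinh r / Real.cosh r)) * q ≤ r^2 * r :=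
    mul_le_mul hu1 hq1 hqpos.le (by positivity)
  have hc4a : 1 ≤ Real.cosh r^4 := one_le_pow₀ hc1
  have hc4b : Real.cosh r^4 ≤ 16 := by
    calc Real.cosh r^4 ≤ 2^4 := pow_le_pow_left₀ hc.le hc2 4
    _ = 16 := by norm_num
  have hD1 : r^3 ≤ Df r := by
    unfold Df
    rw [← hqdef]
    calc r^3 ≤ 1 * (4 * ((r * (Real.sinh r / Real.cosh r)) * q)) := by nlinarith [huq0]
    _ ≤ Real.cosh r^4 * (4 * ((r * (Real.sinh r / Real.cosh r)) * q)) :=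
        mul_le_mul_of_nonneg_right hc4a (by positivity)
    _ = Real.cosh r^4 * (4 * (r * (Real.sinh r / Real.cosh r)) * q) := by ring
  have hD2 : Df r ≤ 64*r^3 := by
    unfold Df
    rw [← hqdef]
    calc Real.cosh r^4 * (4 * (r * (Real.sinh r / Real.cosh r)) * q)
        = Real.cosh r^4 * (4 * ((r * (Real.sinh r / Real.cosh r)) * q)) := by ring
    _ ≤ 16 * (4 * ((r * (Real.sinh r / Real.cosh r)) * q)) :=
        mul_le_mul_of_nonneg_right hc4b (by positivity)
    _ ≤ 16 * (4 * (r^2 * r)) := by nlinarith [huq1]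
    _ = 64*r^3 := by ring
  have hDfpos := Df_pos hr
  -- A bounds
  set A := (Real.sqrt (1 + r^2)) ^ (-(5/2) : ℝ) with hAdef
  have hax : (1:ℝ) ≤ Real.sqrt (1 + r^2) := by
    rw [Real.le_sqrt zero_le_one (by positivity)]
    nlinarith
  have hA1 : A ≤ 1 := Real.rpow_le_one_of_one_le_of_nonpos hax (by norm_num)
  have hA2 : (4:ℝ)⁻¹ ≤ A := by
    rw [hAdef, A_repr r]
    have hsq2 : Real.sqrt (1+r^2) ≤ 2 := by
      rw [show (2:ℝ) = Real.sqrt 4 by rw [show (4:ℝ) = 2^2 by norm_num, Real.sqrt_sq]; norm_num]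
      exact Real.sqrt_le_sqrt (by nlinarith)
    have hsq3 : Real.sqrt (Real.sqrt (1+r^2)) ≤ 2 := by
      rw [show (2:ℝ) = Real.sqrt 4 by rw [show (4:ℝ) = 2^2 by norm_num, Real.sqrt_sq]; norm_num]
      exact Real.sqrt_le_sqrt (by linarith)
    have hprod : (1+r^2) * Real.sqrt (Real.sqrt (1+r^2)) ≤ 4 := by
      nlinarith [Real.sqrt_nonneg (Real.sqrt (1+r^2))]
    have hppos : 0 < (1+r^2) * Real.sqrt (Real.sqrt (1+r^2)) := by
      have := lt_of_lt_of_le one_pos hax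
      positivity
    exact inv_anti₀ hppos hprod
  constructor
  · have st2 : r/16 ≤ Pf r / Df r := by
      rw [le_div_iff₀ hDfpos]
      nlinarith [mul_le_mul_of_nonneg_left hD2 (by positivity : (0:ℝ) ≤ r/16)]
    nlinarith [hA1, hr.le, mul_le_mul_of_nonneg_left hA1 hr.le]
  · have st3 : Pf r / Df r ≤ 80*r := by
      rw [div_le_iff₀ hDfpos]
      nlinarith [mul_le_mul_of_nonneg_left hD1 (by positivity : (0:ℝ) ≤ 80*r)]
    nlinarith [mul_le_mul_of_nonneg_left hA2 hr.le]

lemma bound_big {r : ℝ} (hr1 : 1 ≤ r) :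
    (1/900) * (r * (Real.sqrt (1 + r^2)) ^ (-(5/2) : ℝ)) ≤ Pf r / Df r ∧
      Pf r / Df r ≤ 400 * (r * (Real.sqrt (1 + r^2)) ^ (-(5/2) : ℝ)) := by
  have hr : 0 < r := lt_of_lt_of_le one_pos hr1
  have hc := Real.cosh_pos r
  have hs : 0 < Real.sinh r := Real.sinh_pos_iff.2 hr
  set X := Real.exp r with hXdef
  have hXpos : 0 < X := Real.exp_pos r
  have hX27 : 2.7 ≤ X := by
    have h1 : Real.exp 1 ≤ X := Real.exp_le_exp.2 hr1
    have h2 := Real.exp_one_gt_d9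
    linarith
  have hrX : 2.7 * r ≤ X := by
    have h1 : r - 1 + 1 ≤ Real.exp (r - 1) := Real.add_one_le_exp (r - 1)
    have h2 : X = Real.exp 1 * Real.exp (r - 1) := by
      rw [hXdef, ← Real.exp_add]; norm_num
    have h3 := Real.exp_one_gt_d9
    have h4 := Real.exp_pos (r-1)
    nlinarith [mul_le_mul_of_nonneg_left h1 (Real.exp_pos 1).le]
  set v := X⁻¹ with hvdef
  have hvpos : 0 < v := by positivity
  have hv2 : v ≤ 1/2 := by
    rw [hvdef]
    rw [inv_le_comm₀ (by positivity) (by norm_num)]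
    linarith
  have hs_eq : Real.sinh r = (X - v)/2 := by rw [Real.sinh_eq, Real.exp_neg]
  have hc_eq : Real.cosh r = (X + v)/2 := by rw [Real.cosh_eq, Real.exp_neg]
  have hc_le : Real.cosh r ≤ X := by rw [hc_eq]; linarith
  have hc_ge : X/2 ≤ Real.cosh r := by rw [hc_eq]; linarith
  have hs_le : Real.sinh r ≤ X/2 := by rw [hs_eq]; linarith
  have h2s : Real.cosh r ≤ 2*Real.sinh r := by rw [hs_eq, hc_eq]; linarith
  have ht0 : 1/2 ≤ Real.sinh r / Real.cosh r := (le_div_iff₀ hc).2 (by linarith)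
  have ht1 : Real.sinh r / Real.cosh r ≤ 1 := (div_le_one hc).2 (by rw [hs_eq, hc_eq]; linarith)
  have hupos : 0 < r * (Real.sinh r / Real.cosh r) := by positivity
  have hu0 : r/2 ≤ r * (Real.sinh r / Real.cosh r) := by nlinarith
  have hu1 : r * (Real.sinh r / Real.cosh r) ≤ r := by nlinarith
  set q := Real.sqrt (r * (Real.sinh r / Real.cosh r)) with hqdef
  have hqpos : 0 < q := Real.sqrt_pos.2 hupos
  have hsrpos : 0 < Real.sqrt r := Real.sqrt_pos.2 hr
  have hsr2 : Real.sqrt r ^ 2 = r := Real.sq_sqrt hr.le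
  have hq1 : q ≤ Real.sqrt r := Real.sqrt_le_sqrt hu1
  have hq0 : Real.sqrt r / 2 ≤ q := by
    rw [hqdef, Real.le_sqrt (by positivity) hupos.le]
    rw [div_pow, hsr2]
    nlinarith
  -- P bounds
  have hsc_eq : Real.sinh r * Real.cosh r = (X^2 - v^2)/4 := by
    rw [hs_eq, hc_eq]; ring
  have hscr : X^2/15 ≤ Real.sinh r * Real.cosh r - r := by
    rw [hsc_eq]
    nlinarith [sq_nonneg (X - 2.7), hv2, hvpos]
  have hscr0 : 0 ≤ Real.sinh r * Real.cosh r - r := by nlinarith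
  have hsc_le : Real.sinh r * Real.cosh r ≤ X^2/4 := by
    rw [hsc_eq]; nlinarith [sq_nonneg v]
  have hP_low : X^4/225 ≤ Pf r := by
    unfold Pf
    nlinarith [mul_le_mul hscr hscr (by positivity) hscr0,
      mul_nonneg (mul_nonneg (by norm_num : (0:ℝ) ≤ 4) (sq_nonneg r)) (sq_nonneg (Real.sinh r))]
  have hP_up : Pf r ≤ X^4/4 := by
    unfold Pf
    have e1 : r ≤ X/2.7 := by
      rw [le_div_iff₀ (by norm_num : (0:ℝ) < 2.7)]
      linarith
    have e2 : r^2 ≤ (X/2.7)^2 := by nlinarith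
    have e3 : Real.sinh r^2 ≤ (X/2)^2 := by nlinarith
    have e4 : (Real.sinh r*Real.cosh r - r)^2 ≤ (X^2/4)^2 := by
      nlinarith
    have e5 : 4*r^2*Real.sinh r^2 ≤ 4*((X/2.7)^2*(X/2)^2) := by
      nlinarith [mul_le_mul e2 e3 (sq_nonneg (Real.sinh r)) (by positivity : (0:ℝ) ≤ (X/2.7)^2)]
    have e6 : 4*((X/2.7)^2*(X/2)^2) = X^4 * (100/729) := by ring
    have e7 : (X^2/4)^2 = X^4/16 := by ring
    nlinarith [pow_nonneg hXpos.le 4]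
  -- D bounds
  have hc4a : (X/2)^4 ≤ Real.cosh r^4 := pow_le_pow_left₀ (by positivity) hc_ge 4
  have hc4b : Real.cosh r^4 ≤ X^4 := pow_le_pow_left₀ hc.le hc_le 4
  have huq0 : r/2 * (Real.sqrt r/2) ≤ (r * (Real.sinh r / Real.cosh r)) * q :=
    mul_le_mul hu0 hq0 (by positivity) hupos.le
  have huq1 : (r * (Real.sinh r / Real.cosh r)) * q ≤ r * Real.sqrt r :=
    mul_le_mul hu1 hq1 hqpos.le hr.le
  have hD_low : X^4*(r*Real.sqrt r)/16 ≤ Df r := by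
    unfold Df
    rw [← hqdef]
    calc X^4*(r*Real.sqrt r)/16 = (X/2)^4 * (4 * (r/2 * (Real.sqrt r/2))) := by ring
    _ ≤ (X/2)^4 * (4 * ((r * (Real.sinh r / Real.cosh r)) * q)) := by
        apply mul_le_mul_of_nonneg_left _ (by positivity)
        linarith
    _ ≤ Real.cosh r^4 * (4 * ((r * (Real.sinh r / Real.cosh r)) * q)) := by
        apply mul_le_mul_of_nonneg_right hc4a (by positivity)
    _ = Real.cosh r^4 * (4 * (r * (Real.sinh r / Real.cosh r)) * q) := by ring
  have hD_up : Df r ≤ 4*X^4*(r*Real.sqrt r) := by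
    unfold Df
    rw [← hqdef]
    calc Real.cosh r^4 * (4 * (r * (Real.sinh r / Real.cosh r)) * q)
        = Real.cosh r^4 * (4 * ((r * (Real.sinh r / Real.cosh r)) * q)) := by ring
    _ ≤ X^4 * (4 * ((r * (Real.sinh r / Real.cosh r)) * q)) :=
        mul_le_mul_of_nonneg_right hc4b (by positivity)
    _ ≤ X^4 * (4 * (r * Real.sqrt r)) := by
        apply mul_le_mul_of_nonneg_left _ (by positivity)
        linarith
    _ = 4*X^4*(r*Real.sqrt r) := by ring
  have hDfpos := Df_pos hr
  -- A bounds
  have h1r2 : (0:ℝ) < 1 + r^2 := by positivity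
  have hsq1 : Real.sqrt r ≤ Real.sqrt (Real.sqrt (1+r^2)) := by
    apply Real.sqrt_le_sqrt
    calc r = Real.sqrt (r^2) := (Real.sqrt_sq hr.le).symm
    _ ≤ Real.sqrt (1+r^2) := Real.sqrt_le_sqrt (by linarith)
  have hsq2 : Real.sqrt (Real.sqrt (1+r^2)) ≤ 2*Real.sqrt r := by
    have e1 : Real.sqrt (1+r^2) ≤ 2*r := by
      calc Real.sqrt (1+r^2) ≤ Real.sqrt ((2*r)^2) := Real.sqrt_le_sqrt (by nlinarith)
      _ = 2*r := Real.sqrt_sq (by positivity)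
    calc Real.sqrt (Real.sqrt (1+r^2)) ≤ Real.sqrt (2*r) := Real.sqrt_le_sqrt e1
    _ ≤ Real.sqrt ((2*Real.sqrt r)^2) := Real.sqrt_le_sqrt (by nlinarith)
    _ = 2*Real.sqrt r := Real.sqrt_sq (by positivity)
  have hA_up : (Real.sqrt (1 + r^2)) ^ (-(5/2) : ℝ) ≤ (r^2*Real.sqrt r)⁻¹ := by
    rw [A_repr r]
    apply inv_anti₀ (by positivity)
    calc r^2*Real.sqrt r ≤ (1+r^2)*Real.sqrt r := by nlinarith [hsrpos.le]
    _ ≤ (1+r^2)*Real.sqrt (Real.sqrt (1+r^2)) := by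
        apply mul_le_mul_of_nonneg_left hsq1 (by positivity)
  have hA_low : (4*(r^2*Real.sqrt r))⁻¹ ≤ (Real.sqrt (1 + r^2)) ^ (-(5/2) : ℝ) := by
    rw [A_repr r]
    apply inv_anti₀ (by positivity)
    have h2r : (1+r^2) ≤ 2*r^2 := by nlinarith
    calc (1+r^2)*Real.sqrt (Real.sqrt (1+r^2)) ≤ (2*r^2)*(2*Real.sqrt r) :=
      mul_le_mul h2r hsq2 (Real.sqrt_nonneg _) (by positivity)
    _ = 4*(r^2*Real.sqrt r) := by ring
  constructor
  · -- lower bound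
    have key : (1/900) * (r * (r^2*Real.sqrt r)⁻¹) ≤ Pf r / Df r := by
      rw [le_div_iff₀ hDfpos]
      have e0 : (0:ℝ) ≤ (1/900) * (r * (r^2*Real.sqrt r)⁻¹) := by positivity
      calc (1/900) * (r * (r^2*Real.sqrt r)⁻¹) * Df r
          ≤ (1/900) * (r * (r^2*Real.sqrt r)⁻¹) * (4*X^4*(r*Real.sqrt r)) :=
            mul_le_mul_of_nonneg_left hD_up e0
      _ = X^4/225 := by field_simp; ring
      _ ≤ Pf r := hP_low
    have e1 : (1/900) * (r * (Real.sqrt (1 + r^2)) ^ (-(5/2) : ℝ))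
        ≤ (1/900) * (r * (r^2*Real.sqrt r)⁻¹) := by
      apply mul_le_mul_of_nonneg_left _ (by norm_num)
      exact mul_le_mul_of_nonneg_left hA_up hr.le
    linarith
  · -- upper bound
    have key : Pf r / Df r ≤ 400 * (r * (4*(r^2*Real.sqrt r))⁻¹) := by
      rw [div_le_iff₀ hDfpos]
      have e0 : (0:ℝ) ≤ 400 * (r * (4*(r^2*Real.sqrt r))⁻¹) := by positivity
      calc Pf r ≤ X^4/4 := hP_up
      _ ≤ 400 * (r * (4*(r^2*Real.sqrt r))⁻¹) * (X^4*(r*Real.sqrt r)/16) := by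
          have hE : 400 * (r * (4*(r^2*Real.sqrt r))⁻¹) * (X^4*(r*Real.sqrt r)/16)
              = X^4*(25/4) := by field_simp; ring
          rw [hE]
          nlinarith [pow_nonneg hXpos.le 4]
      _ ≤ 400 * (r * (4*(r^2*Real.sqrt r))⁻¹) * Df r :=
          mul_le_mul_of_nonneg_left hD_low e0
    have e1 : 400 * (r * (4*(r^2*Real.sqrt r))⁻¹)
        ≤ 400 * (r * (Real.sqrt (1 + r^2)) ^ (-(5/2) : ℝ)) := by
      apply mul_le_mul_of_nonneg_left _ (by norm_num)
      exact mul_le_mul_of_nonneg_left hA_low hr.le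
    linarith

noncomputable def g0 (x : ℝ) : ℝ :=
  (Real.sinh x / Real.cosh x + x / Real.cosh x ^ 2) /
    (2 * Real.sqrt (x * (Real.sinh x / Real.cosh x)))

lemma m0_eq : m0 = fun x => Real.sqrt (x * (Real.sinh x / Real.cosh x)) := by
  funext x; rw [m0, Real.tanh_eq_sinh_div_cosh]

lemma hasDerivAt_u (x : ℝ) :
    HasDerivAt (fun y => y * (Real.sinh y / Real.cosh y))
      (Real.sinh x / Real.cosh x + x / Real.cosh x ^ 2) x := by
  have hc := Real.cosh_pos x
  have h := (hasDerivAt_id' x).mul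
    ((Real.hasDerivAt_sinh x).div (Real.hasDerivAt_cosh x) hc.ne')
  refine h.congr_deriv (Eq.symm ?_)
  have h1 : Real.cosh x * Real.cosh x - Real.sinh x * Real.sinh x = 1 := by
    linear_combination Real.cosh_sq_sub_sinh_sq x
  rw [h1]; simp [div_eq_mul_inv]

lemma u_pos {x : ℝ} (hx : 0 < x) : 0 < x * (Real.sinh x / Real.cosh x) :=
  mul_pos hx (div_pos (Real.sinh_pos_iff.2 hx) (Real.cosh_pos x))

lemma m0_hasDeriv {x : ℝ} (hx : 0 < x) : HasDerivAt m0 (g0 x) x := by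
  rw [m0_eq]
  exact (hasDerivAt_u x).sqrt (u_pos hx).ne'

lemma g0_hasDeriv {x : ℝ} (hx : 0 < x) : HasDerivAt g0 (-(Pf x / Df x)) x := by
  have hc := Real.cosh_pos x
  have hs := Real.sinh_pos_iff.2 hx
  have hu := u_pos hx
  have hq : 0 < Real.sqrt (x * (Real.sinh x / Real.cosh x)) := Real.sqrt_pos.2 hu
  have hq2 : Real.sqrt (x * (Real.sinh x / Real.cosh x)) ^ 2 = x * (Real.sinh x / Real.cosh x) :=
    Real.sq_sqrt hu.le
  have hn : HasDerivAt (fun y => Real.sinh y / Real.cosh y + y / Real.cosh y ^ 2)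
      ((Real.cosh x * Real.cosh x - Real.sinh x * Real.sinh x) / Real.cosh x ^ 2
        + (1 * Real.cosh x ^ 2 - x * (2 * Real.cosh x ^ 1 * Real.sinh x)) / (Real.cosh x ^ 2) ^ 2) x :=
    ((Real.hasDerivAt_sinh x).div (Real.hasDerivAt_cosh x) hc.ne').add
      ((hasDerivAt_id' x).div ((Real.hasDerivAt_cosh x).pow 2) (pow_ne_zero 2 hc.ne'))
  have hd : HasDerivAt (fun y => 2 * Real.sqrt (y * (Real.sinh y / Real.cosh y)))
      (2 * ((Real.sinh x / Real.cosh x + x / Real.cosh x ^ 2)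
        / (2 * Real.sqrt (x * (Real.sinh x / Real.cosh x))))) x :=
    ((hasDerivAt_u x).sqrt hu.ne').const_mul 2
  have hden : 2 * Real.sqrt (x * (Real.sinh x / Real.cosh x)) ≠ 0 := by positivity
  have h := hn.div hd hden
  refine h.congr_deriv (Eq.symm ?_)
  unfold Pf Df
  set s := Real.sinh x
  set c := Real.cosh x
  set q := Real.sqrt (x * (s / c)) with hqdef
  have hcs : c ^ 2 - s ^ 2 = 1 := Real.cosh_sq_sub_sinh_sq x
  have e0 : (c * c - s * s) / c ^ 2 + (1 * c ^ 2 - x * (2 * c ^ 1 * s)) / (c ^ 2) ^ 2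
      = (2*c^2 - 2*x*c*s)/c^4 := by
    field_simp
    linear_combination c * hcs
  rw [e0]
  have e1 : ((2*c^2 - 2*x*c*s)/c^4 * (2 * q) -
      (s / c + x / c ^ 2) * (2 * ((s / c + x / c ^ 2) / (2 * q))))
      = (4*q^2*(c^2 - x*c*s) - (s*c+x)^2)/(c^4*q) := by
    field_simp
    ring
  rw [e1, hq2]
  have e2 : (4*(x*(s/c))*(c^2 - x*c*s) - (s*c+x)^2)
      = -(4*x^2*s^2 + (s*c - x)^2) := by
    field_simp
    ring
  rw [e2, ← hq2]
  field_simp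
  ring

lemma deriv_m0_eventually_eq {x : ℝ} (hx : 0 < x) : deriv m0 =ᶠ[nhds x] g0 := by
  filter_upwards [isOpen_Ioi.mem_nhds (show x ∈ Set.Ioi 0 from hx)] with y hy
  exact (m0_hasDeriv hy).deriv

lemma deriv2_m0 {x : ℝ} (hx : 0 < x) : deriv (deriv m0) x = -(Pf x / Df x) := by
  rw [(deriv_m0_eventually_eq hx).deriv_eq, (g0_hasDeriv hx).deriv]

/-- `m₀` is twice differentiable on `(0,∞)`, `m₀'' < 0`, and `|m₀''(r)| ∼ r ⟨r⟩^{-5/2}`. -/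
theorem stmt_12 :
    (∀ r : ℝ, 0 < r → DifferentiableAt ℝ m0 r ∧ DifferentiableAt ℝ (deriv m0) r) ∧
      ∃ c > (0 : ℝ), ∃ C > (0 : ℝ), ∀ r : ℝ, 0 < r →
        deriv (deriv m0) r < 0 ∧
        c * (r * (Real.sqrt (1 + r ^ 2)) ^ (-(5 / 2) : ℝ)) ≤ |deriv (deriv m0) r| ∧
        |deriv (deriv m0) r| ≤ C * (r * (Real.sqrt (1 + r ^ 2)) ^ (-(5 / 2) : ℝ)) := by
  constructor
  · intro r hr
    exact ⟨(m0_hasDeriv hr).differentiableAt,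
      (g0_hasDeriv hr).differentiableAt.congr_of_eventuallyEq (deriv_m0_eventually_eq hr)⟩
  · refine ⟨1/900, by norm_num, 400, by norm_num, fun r hr => ?_⟩
    have h2 := deriv2_m0 hr
    have hPp := Pf_pos hr
    have hDp := Df_pos hr
    have hpos : 0 < Pf r / Df r := div_pos hPp hDp
    have hneg : deriv (deriv m0) r < 0 := by rw [h2]; linarith
    have habs : |deriv (deriv m0) r| = Pf r / Df r := by
      rw [h2, abs_neg, abs_of_pos hpos]
    rcases le_or_gt r 1 with h | h
    · obtain ⟨b1, b2⟩ := bound_small hr h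
      exact ⟨hneg, by rw [habs]; exact b1, by rw [habs]; exact b2⟩
    · obtain ⟨b1, b2⟩ := bound_big h.le
      exact ⟨hneg, by rw [habs]; exact b1, by rw [habs]; exact b2⟩
end
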